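/- Let 0 < α₂ ≤ α₁ ≤ 1, 0 < β₁ ≤ β₂ ≤ 1 and M₁, M₂, N₁, N₂ > 0. Set F₁ = F(α₁, M₁, α₂, M₂) and F₂ = F(β₁, N₁, β₂, N₂), with Tf = f(0), and let γ = max(min(α₁, β₁), min(α₂, β₂)). Then there exist constants 0 < c ≤ C < ∞ and ε₀ > 0 such that c·ε^{2γ/(2γ+1)} ≤ ω₊(ε, F₁, F₂) ≤ C·ε^{2γ/(2γ+1)} for all 0 < ε ≤ ε₀. -/

import Mathlib

open MeasureTheory ProbabilityTheory Real Filter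
open scoped ENNReal NNReal RealInnerProductSpace

noncomputable section

/-- The Hilbert space `H = L²([-1/2, 1/2], ℝ)`. -/
abbrev H : Type :=
  MeasureTheory.Lp (α := ℝ) ℝ 2 (volume.restrict (Set.Icc (-(1:ℝ)/2) (1/2)))

/-- The set of increments `T g - T f` over pairs `f ∈ F`, `g ∈ G` with `‖g - f‖₂ ≤ ε`. -/
def modSet (T : H → ℝ) (F G : Set H) (ε : ℝ) : Set ℝ :=
  {d : ℝ | ∃ f ∈ F, ∃ g ∈ G, ‖g - f‖ ≤ ε ∧ d = T g - T f}

/-- The ordered modulus of continuity `ω(ε, F, G)`. -/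
def omegaMod (T : H → ℝ) (F G : Set H) (ε : ℝ) : ℝ := sSup (modSet T F G ε)

/-- The between-class modulus of continuity `ω₊(ε, F, G)`. -/
def omegaPlus (T : H → ℝ) (F G : Set H) (ε : ℝ) : ℝ :=
  max (omegaMod T F G ε) (omegaMod T G F ε)

/-- All the moduli `ω(ε, F, G)` are finite (the defining suprema are over bounded sets). -/
def FiniteModuli (T : H → ℝ) (F G : Set H) : Prop := ∀ ε : ℝ, BddAbove (modSet T F G ε)

/-- `P` is the law of white-noise data with drift `f` at noise level `n`, in sequence form with
respect to the orthonormal basis `e`: a probability measure on `ℝ^ℕ` whose finite-dimensional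
marginals are products of Gaussians `N(⟪f, e i⟫, 1/n)`. -/
def IsWhiteNoiseLaw (e : ℕ → H) (n : ℕ) (f : H) (P : Measure (ℕ → ℝ)) : Prop :=
  IsProbabilityMeasure P ∧
    ∀ s : Finset ℕ,
      P.map (fun y (i : s) => y i) =
        Measure.pi (fun i : s => gaussianReal ⟪f, e i⟫ (n : ℝ≥0)⁻¹)

/-- The mean squared error `E_f (T̂ - Tf)²` of an estimator `T̂` when the target value is `t`,
as an extended real. -/
def risk (P : Measure (ℕ → ℝ)) (That : (ℕ → ℝ) → ℝ) (t : ℝ) : ℝ≥0∞ :=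
  ∫⁻ y, ENNReal.ofReal ((That y - t) ^ 2) ∂P

/-- The affine estimator `y ↦ a₀ + Σᵢ aᵢ yᵢ`. -/
def affineEst (a0 : ℝ) (a : ℕ → ℝ) (y : ℕ → ℝ) : ℝ := a0 + ∑' i, a i * y i

/-- The variance `(Σᵢ aᵢ²)/n` of an affine estimator under the white-noise law at level `n`. -/
def affineVar (n : ℕ) (a : ℕ → ℝ) : ℝ := (∑' i, a i ^ 2) / n

/-- The mean `a₀ + Σᵢ aᵢ ⟪f, eᵢ⟫` of an affine estimator under `P_f`. -/
def affineMean (e : ℕ → H) (a0 : ℝ) (a : ℕ → ℝ) (f : H) : ℝ := a0 + ∑' i, a i * ⟪f, e i⟫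

/-- The two-sided Hölder class `F(α₁, M₁, α₂, M₂) = F^L(α₁, M₁) ∩ F^R(α₂, M₂)` of functions on
`[-1/2, 1/2]` whose restriction to `[-1/2, 0]` is `(α₁, M₁)`-Hölder and whose restriction to
`[0, 1/2]` is `(α₂, M₂)`-Hölder, viewed as a subset of `L²([-1/2, 1/2])`. -/
def twoSidedHolderClass (α₁ M₁ α₂ M₂ : ℝ) : Set H :=
  {f : H | ∃ g : ℝ → ℝ,
    (∀ x y : ℝ, -(1:ℝ)/2 ≤ x → x ≤ y → y ≤ 0 → |g x - g y| ≤ M₁ * |x - y| ^ α₁) ∧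
    (∀ x y : ℝ, (0:ℝ) ≤ x → x ≤ y → y ≤ 1/2 → |g x - g y| ≤ M₂ * |x - y| ^ α₂) ∧
    ∀ᵐ x ∂(volume.restrict (Set.Icc (-(1:ℝ)/2) (1/2))), f x = g x}

/-!
Upper bound: for `f ∈ F₁`, `g ∈ F₂` put `d = g - f`. On a side where `γ` is attained both `f`
and `g` are `γ`-Hölder, so `|d| ≥ |d 0| - K w^γ` on the interval of length `w` next to `0` on that
side, whence `(|d 0| - K w^γ) √w ≤ ‖g - f‖₂ ≤ ε`; taking `w ≍ ε^{2/(2γ+1)}` gives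
`|d 0| ≲ ε^{2γ/(2γ+1)}`.

Lower bound: the bump `h - min (K |x|^γ) h` with `h = K W^γ` has height `h` at `0` and
`L²` norm at most `h √(2W)`. On each side it is carried by whichever of `f`, `g` has exponent
at most `γ` there (this is where `γ = max (min α₁ β₁) (min α₂ β₂)` comes from), the other one
being constant. Taking `W ≍ ε^{2/(2γ+1)}` makes the norm `≤ ε` and the height `≍ ε^{2γ/(2γ+1)}`.
-/

local notation "I" => Set.Icc (-(1:ℝ)/2) (1/2)
local notation "μI" => volume.restrict (Set.Icc (-(1:ℝ)/2) (1/2))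

open Set

/-- Written exactly as in `twoSidedHolderClass`, so that membership in the class unfolds to it. -/
def HolderOnIcc (M α : ℝ) (u : ℝ → ℝ) (a b : ℝ) : Prop :=
  ∀ x y, a ≤ x → x ≤ y → y ≤ b → |u x - u y| ≤ M * |x - y| ^ α

namespace HolderOnIcc

variable {M N α γ a b : ℝ} {u v : ℝ → ℝ}

lemma abs_sub_le (h : HolderOnIcc M α u a b) {x y : ℝ} (hx : x ∈ Icc a b) (hy : y ∈ Icc a b) :
    |u x - u y| ≤ M * |x - y| ^ α := by
  rcases le_total x y with hxy | hyx
  · exact h x y hx.1 hxy hy.2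
  · rw [abs_sub_comm, abs_sub_comm x]
    exact h y x hy.1 hyx hx.2

lemma abs_sub_apply_zero_le (h : HolderOnIcc M α u a b) (h0 : (0 : ℝ) ∈ Icc a b) {x : ℝ}
    (hx : x ∈ Icc a b) : |u x - u 0| ≤ M * |x| ^ α := by
  simpa using h.abs_sub_le hx h0

lemma congr (h : HolderOnIcc M α u a b) (huv : EqOn u v (Icc a b)) : HolderOnIcc M α v a b :=
  fun x y hx hxy hy => by
    rw [← huv ⟨hx, hxy.trans hy⟩, ← huv ⟨hx.trans hxy, hy⟩]
    exact h x y hx hxy hy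

lemma const (hM : 0 ≤ M) (c : ℝ) : HolderOnIcc M α (fun _ => c) a b :=
  fun x y _ _ _ => by simp only [sub_self, abs_zero]; positivity

lemma const_sub (h : HolderOnIcc M α u a b) (c : ℝ) : HolderOnIcc M α (fun x => c - u x) a b :=
  fun x y hx hxy hy => by
    rw [sub_sub_sub_cancel_left, abs_sub_comm]
    exact h x y hx hxy hy

lemma sub (hu : HolderOnIcc M α u a b) (hv : HolderOnIcc N α v a b) :
    HolderOnIcc (M + N) α (u - v) a b := fun x y hx hxy hy =>
  calc |(u - v) x - (u - v) y| = |(u x - u y) - (v x - v y)| := by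
        simp only [Pi.sub_apply]; ring_nf
    _ ≤ |u x - u y| + |v x - v y| := abs_sub _ _
    _ ≤ (M + N) * |x - y| ^ α := by
        rw [add_mul]; exact add_le_add (hu x y hx hxy hy) (hv x y hx hxy hy)

lemma mono_const (h : HolderOnIcc M α u a b) (hMN : M ≤ N) : HolderOnIcc N α u a b :=
  fun x y hx hxy hy => (h x y hx hxy hy).trans (by gcongr)

lemma mono_exponent (h : HolderOnIcc M γ u a b) (hM : 0 ≤ M) (hα : 0 ≤ α) (hαγ : α ≤ γ)
    (hab : b - a ≤ 1) : HolderOnIcc M α u a b := fun x y hx hxy hy => by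
  have hxy1 : |x - y| ≤ 1 := by rw [abs_sub_comm, abs_of_nonneg (sub_nonneg.2 hxy)]; linarith
  exact (h x y hx hxy hy).trans
    (mul_le_mul_of_nonneg_left (rpow_le_rpow_of_exponent_ge' (abs_nonneg _) hxy1 hα hαγ) hM)

lemma continuousOn (h : HolderOnIcc M α u a b) (hα : 0 < α) : ContinuousOn u (Icc a b) := by
  have hH : HolderOnWith M.toNNReal α.toNNReal u (Icc a b) := fun x hx y hy => by
    rw [edist_dist, edist_dist, Real.coe_toNNReal α hα.le,
      ENNReal.ofReal_rpow_of_nonneg dist_nonneg hα.le, ← ENNReal.ofReal_coe_nnreal,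
      ← ENNReal.ofReal_mul' (by positivity), Real.coe_toNNReal']
    refine ENNReal.ofReal_le_ofReal ?_
    simp only [Real.dist_eq]
    exact (h.abs_sub_le hx hy).trans (by gcongr; exact le_max_left _ _)
  exact hH.continuousOn (by simpa using hα)

end HolderOnIcc

lemma holderOnIcc_ite_le_zero {M M' α α' a b : ℝ} {φ ψ : ℝ → ℝ}
    (hφ : HolderOnIcc M α φ a 0) (hψ : HolderOnIcc M' α' ψ 0 b) (h0 : φ 0 = ψ 0) :
    HolderOnIcc M α (fun x => if x ≤ 0 then φ x else ψ x) a 0 ∧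
      HolderOnIcc M' α' (fun x => if x ≤ 0 then φ x else ψ x) 0 b := by
  refine ⟨hφ.congr fun x hx => (if_pos hx.2).symm, hψ.congr fun x hx => ?_⟩
  by_cases hx0 : x ≤ 0
  · rw [le_antisymm hx0 hx.1, if_pos le_rfl, h0]
  · exact (if_neg hx0).symm

lemma abs_rpow_sub_rpow_le {x y γ : ℝ} (hx : 0 ≤ x) (hy : 0 ≤ y) (hγ0 : 0 ≤ γ) (hγ1 : γ ≤ 1) :
    |x ^ γ - y ^ γ| ≤ |x - y| ^ γ := by
  wlog hyx : y ≤ x generalizing x y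
  · rw [abs_sub_comm, abs_sub_comm x]; exact this hy hx (le_of_not_ge hyx)
  have hmono : y ^ γ ≤ x ^ γ := rpow_le_rpow hy hyx hγ0
  rw [abs_of_nonneg (sub_nonneg.2 hmono), abs_of_nonneg (sub_nonneg.2 hyx), sub_le_iff_le_add]
  calc x ^ γ = (x - y + y) ^ γ := by rw [sub_add_cancel]
    _ ≤ (x - y) ^ γ + y ^ γ := rpow_add_le_add_rpow (sub_nonneg.2 hyx) hy hγ0 hγ1

lemma holderOnIcc_min_mul_abs_rpow {K γ : ℝ} (hK : 0 ≤ K) (hγ0 : 0 ≤ γ) (hγ1 : γ ≤ 1)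
    (h a b : ℝ) : HolderOnIcc K γ (fun x => min (K * |x| ^ γ) h) a b := fun x y _ _ _ =>
  calc |min (K * |x| ^ γ) h - min (K * |y| ^ γ) h|
      ≤ max |K * |x| ^ γ - K * |y| ^ γ| |h - h| := abs_min_sub_min_le_max _ _ _ _
    _ = K * |(|x|) ^ γ - |y| ^ γ| := by
        rw [sub_self, abs_zero, ← mul_sub, abs_mul, abs_of_nonneg hK]
        exact max_eq_left (by positivity)
    _ ≤ K * |x - y| ^ γ := by
        gcongr
        exact (abs_rpow_sub_rpow_le (abs_nonneg x) (abs_nonneg y) hγ0 hγ1).trans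
          (rpow_le_rpow (abs_nonneg _) (abs_abs_sub_abs_le_abs_sub x y) hγ0)

lemma continuousOn_Icc_of_holderOnIcc {M₁ M₂ α₁ α₂ : ℝ} {u : ℝ → ℝ}
    (hL : HolderOnIcc M₁ α₁ u (-(1:ℝ)/2) 0) (hR : HolderOnIcc M₂ α₂ u 0 (1/2))
    (h₁ : 0 < α₁) (h₂ : 0 < α₂) : ContinuousOn u I := by
  rw [← Icc_union_Icc_eq_Icc (b := 0) (by norm_num) (by norm_num)]
  exact (hL.continuousOn h₁).union_of_isClosed (hR.continuousOn h₂) isClosed_Icc isClosed_Icc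

lemma memLp_of_continuousOn {u : ℝ → ℝ} (hu : ContinuousOn u I) : MemLp u 2 μI := by
  obtain ⟨C, hC⟩ := isCompact_Icc.exists_bound_of_continuousOn hu
  exact MemLp.of_bound (hu.aestronglyMeasurable measurableSet_Icc) C
    ((ae_restrict_iff' measurableSet_Icc).2 (ae_of_all _ hC))

def EvaluatesAtZero (T : H → ℝ) : Prop :=
  ∀ (f : H) (g : ℝ → ℝ), ContinuousOn g I → (∀ᵐ x ∂μI, f x = g x) → T f = g 0

section TwoSidedHolderClass

variable {T : H → ℝ} {α₁ α₂ M₁ M₂ : ℝ}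

lemma exists_holderOnIcc_rep (hT : EvaluatesAtZero T) {f : H}
    (hf : f ∈ twoSidedHolderClass α₁ M₁ α₂ M₂) (h₁ : 0 < α₁) (h₂ : 0 < α₂) :
    ∃ u : ℝ → ℝ, HolderOnIcc M₁ α₁ u (-(1:ℝ)/2) 0 ∧ HolderOnIcc M₂ α₂ u 0 (1/2) ∧
      f =ᵐ[μI] u ∧ T f = u 0 := by
  obtain ⟨u, hL, hR, hfu⟩ := hf
  exact ⟨u, hL, hR, hfu, hT f u (continuousOn_Icc_of_holderOnIcc hL hR h₁ h₂) hfu⟩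

lemma exists_mem_twoSidedHolderClass (hT : EvaluatesAtZero T) {u : ℝ → ℝ}
    (hL : HolderOnIcc M₁ α₁ u (-(1:ℝ)/2) 0) (hR : HolderOnIcc M₂ α₂ u 0 (1/2))
    (h₁ : 0 < α₁) (h₂ : 0 < α₂) :
    ∃ f ∈ twoSidedHolderClass α₁ M₁ α₂ M₂, f =ᵐ[μI] u ∧ T f = u 0 := by
  have hu := continuousOn_Icc_of_holderOnIcc hL hR h₁ h₂
  have hmem := memLp_of_continuousOn hu
  exact ⟨hmem.toLp u, ⟨u, hL, hR, hmem.coeFn_toLp⟩, hmem.coeFn_toLp,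
    hT _ u hu hmem.coeFn_toLp⟩

end TwoSidedHolderClass

section L2Norm

variable {X : Type*} [MeasurableSpace X] {μ : Measure X} {s : Set X} {c : ℝ}

lemma toReal_eLpNorm_indicator_const (hs : MeasurableSet s) (hc : 0 ≤ c) :
    (eLpNorm (s.indicator fun _ => c) 2 μ).toReal = c * √(μ s).toReal := by
  rw [eLpNorm_indicator_const hs two_ne_zero ENNReal.ofNat_ne_top, ENNReal.toReal_mul,
    ← ENNReal.toReal_rpow, Real.sqrt_eq_rpow]
  norm_num [enorm_eq_nnnorm, abs_of_nonneg hc]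

lemma mul_sqrt_le_norm_of_le_abs (F : Lp ℝ 2 μ) {d : X → ℝ} (hF : F =ᵐ[μ] d)
    (hs : MeasurableSet s) (hd : ∀ x ∈ s, c ≤ |d x|) : c * √(μ s).toReal ≤ ‖F‖ := by
  rcases lt_or_ge c 0 with hc | hc
  · exact (mul_nonpos_of_nonpos_of_nonneg hc.le (Real.sqrt_nonneg _)).trans (norm_nonneg _)
  rw [← toReal_eLpNorm_indicator_const hs hc, Lp.norm_def]
  refine ENNReal.toReal_mono (Lp.eLpNorm_ne_top F) ?_
  rw [eLpNorm_congr_ae hF]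
  refine eLpNorm_mono fun x => ?_
  by_cases hx : x ∈ s
  · simpa [indicator_of_mem hx, abs_of_nonneg hc] using hd x hx
  · simp [indicator_of_notMem hx]

lemma norm_le_mul_sqrt_of_abs_le (F : Lp ℝ 2 μ) {d : X → ℝ} (hF : F =ᵐ[μ] d)
    (hs : MeasurableSet s) (hμs : μ s ≠ ∞) (hc : 0 ≤ c) (hd : ∀ x, |d x| ≤ c)
    (hsupp : ∀ x ∉ s, d x = 0) : ‖F‖ ≤ c * √(μ s).toReal := by
  rw [← toReal_eLpNorm_indicator_const hs hc, Lp.norm_def]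
  refine ENNReal.toReal_mono (memLp_indicator_const 2 hs c (Or.inr hμs)).eLpNorm_ne_top ?_
  rw [eLpNorm_congr_ae hF]
  refine eLpNorm_mono fun x => ?_
  by_cases hx : x ∈ s
  · simpa [indicator_of_mem hx, abs_of_nonneg hc] using hd x
  · simp [indicator_of_notMem hx, hsupp x hx]

end L2Norm

lemma sub_mul_sqrt_le_norm {F : H} {d : ℝ → ℝ} (hF : F =ᵐ[μI] d) {a b K γ : ℝ} (hab : a ≤ b)
    (hsub : Icc a b ⊆ I) (hd : ∀ x ∈ Icc a b, |d x - d 0| ≤ K * |x| ^ γ)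
    (hw : ∀ x ∈ Icc a b, |x| ≤ b - a) (hK : 0 ≤ K) (hγ : 0 ≤ γ) :
    (|d 0| - K * (b - a) ^ γ) * √(b - a) ≤ ‖F‖ := by
  have hμ : (μI (Icc a b)).toReal = b - a := by
    rw [Measure.restrict_apply measurableSet_Icc, inter_eq_left.2 hsub, Real.volume_Icc,
      ENNReal.toReal_ofReal (sub_nonneg.2 hab)]
  have hlow : ∀ x ∈ Icc a b, |d 0| - K * (b - a) ^ γ ≤ |d x| := fun x hx => by
    have hKx : K * |x| ^ γ ≤ K * (b - a) ^ γ := by gcongr; exact hw x hx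
    have := abs_sub_abs_le_abs_sub (d 0) (d x)
    rw [abs_sub_comm] at this
    linarith [hd x hx]
  simpa only [hμ] using mul_sqrt_le_norm_of_le_abs F hF measurableSet_Icc hlow

lemma le_of_forall_sub_rpow_mul_sqrt_le {t K γ ε : ℝ} (hK : 0 ≤ K) (hγ : 0 < γ) (hε : 0 < ε)
    (hε1 : ε ≤ 1) (h : ∀ w, 0 < w → w ≤ 1/2 → (t - K * w ^ γ) * √w ≤ ε) :
    t ≤ (K + 2) * ε ^ (2 * γ / (2 * γ + 1)) := by
  set p := 2 * γ / (2 * γ + 1) with hp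
  set s := ε ^ (1 / (2 * γ + 1))
  have hs : 0 < s := rpow_pos_of_pos hε _
  have hsplit : ε = s * ε ^ p := by
    rw [← rpow_add hε, show 1 / (2 * γ + 1) + p = 1 by rw [hp]; field_simp; ring, rpow_one]
  set w := ε ^ (2 / (2 * γ + 1)) / 4 with hw
  have hε' : ε ^ (2 / (2 * γ + 1)) ≤ 1 := rpow_le_one hε.le hε1 (by positivity)
  have hw0 : 0 < w := by positivity
  have hsqrt : √w = s / 2 := by
    rw [Real.sqrt_eq_iff_mul_self_eq_of_pos (by positivity)]
    rw [show s / 2 * (s / 2) = s * s / 4 by ring, ← rpow_add hε]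
    congr 2; ring
  have hwγ : w ^ γ ≤ ε ^ p := by
    have hwε : w ≤ ε ^ (2 / (2 * γ + 1)) := by rw [hw]; linarith
    refine (rpow_le_rpow hw0.le hwε hγ.le).trans_eq ?_
    rw [← rpow_mul hε.le, hp]; congr 1; ring
  have key := h w hw0 (by rw [hw]; linarith)
  rw [hsqrt, hsplit] at key
  have : (t - K * w ^ γ) * s ≤ 2 * ε ^ p * s := by linarith
  have := le_of_mul_le_mul_right this hs
  nlinarith [mul_le_mul_of_nonneg_left hwγ hK]

theorem abs_sub_le_of_norm_sub_le {T : H → ℝ} (hT : EvaluatesAtZero T)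
    {α₁ α₂ β₁ β₂ M₁ M₂ N₁ N₂ ε : ℝ} (hα₁ : 0 < α₁) (hα₂ : 0 < α₂) (hβ₁ : 0 < β₁) (hβ₂ : 0 < β₂)
    (hM₁ : 0 ≤ M₁) (hM₂ : 0 ≤ M₂) (hN₁ : 0 ≤ N₁) (hN₂ : 0 ≤ N₂) (hε : 0 < ε) (hε1 : ε ≤ 1)
    {f g : H} (hf : f ∈ twoSidedHolderClass α₁ M₁ α₂ M₂)
    (hg : g ∈ twoSidedHolderClass β₁ N₁ β₂ N₂) (hfg : ‖g - f‖ ≤ ε) :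
    |T g - T f| ≤ (M₁ + N₁ + M₂ + N₂ + 2) *
      ε ^ (2 * max (min α₁ β₁) (min α₂ β₂) / (2 * max (min α₁ β₁) (min α₂ β₂) + 1)) := by
  set γ := max (min α₁ β₁) (min α₂ β₂)
  have hγ : 0 < γ := lt_max_of_lt_left (lt_min hα₁ hβ₁)
  obtain ⟨u, huL, huR, hfu, hTf⟩ := exists_holderOnIcc_rep hT hf hα₁ hα₂
  obtain ⟨v, hvL, hvR, hgv, hTg⟩ := exists_holderOnIcc_rep hT hg hβ₁ hβ₂
  have hF : g - f =ᵐ[μI] v - u := (Lp.coeFn_sub g f).trans (hgv.sub hfu)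
  rw [hTf, hTg, show v 0 - u 0 = (v - u) 0 from rfl]
  refine le_of_forall_sub_rpow_mul_sqrt_le (by positivity) hγ hε hε1 fun w hw0 hw1 => ?_
  refine le_trans ?_ hfg
  have hbox : ∀ x ∈ Icc (-w) w, |x| ≤ w := fun x hx => abs_le.2 hx
  rcases max_choice (min α₁ β₁) (min α₂ β₂) with hγL | hγR
  · obtain ⟨hγα, hγβ⟩ := le_min_iff.1 hγL.le
    have hd : HolderOnIcc (M₁ + N₁ + M₂ + N₂) γ (v - u) (-(1:ℝ)/2) 0 :=
      ((hvL.mono_exponent hN₁ hγ.le hγβ (by norm_num)).sub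
        (huL.mono_exponent hM₁ hγ.le hγα (by norm_num))).mono_const
        (by linarith)
    simpa using sub_mul_sqrt_le_norm hF (a := -w) (b := 0) (by linarith)
      (Icc_subset_Icc (by linarith) (by norm_num))
      (fun x hx => hd.abs_sub_apply_zero_le (by norm_num) ⟨by linarith [hx.1], hx.2⟩)
      (fun x hx => by simpa using hbox x ⟨hx.1, by linarith [hx.2]⟩) (by positivity) hγ.le
  · obtain ⟨hγα, hγβ⟩ := le_min_iff.1 hγR.le
    have hd : HolderOnIcc (M₁ + N₁ + M₂ + N₂) γ (v - u) 0 (1/2) :=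
      ((hvR.mono_exponent hN₂ hγ.le hγβ (by norm_num)).sub
        (huR.mono_exponent hM₂ hγ.le hγα (by norm_num))).mono_const
        (by linarith)
    simpa using sub_mul_sqrt_le_norm hF (a := 0) (b := w) hw0.le
      (Icc_subset_Icc (by norm_num) (by linarith))
      (fun x hx => hd.abs_sub_apply_zero_le (by norm_num) ⟨hx.1, by linarith [hx.2]⟩)
      (fun x hx => by simpa using hbox x ⟨by linarith [hx.1], hx.2⟩) (by positivity) hγ.le

lemma norm_le_of_ae_eq_bump {F : H} {K γ W : ℝ} (hK : 0 ≤ K) (hγ : 0 ≤ γ) (hW : 0 ≤ W)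
    (hF : F =ᵐ[μI] fun x => K * W ^ γ - min (K * |x| ^ γ) (K * W ^ γ)) :
    ‖F‖ ≤ K * W ^ γ * √(2 * W) := by
  have hh : 0 ≤ K * W ^ γ := by positivity
  have hle : ∀ x, |K * W ^ γ - min (K * |x| ^ γ) (K * W ^ γ)| ≤ K * W ^ γ := fun x => by
    rw [abs_of_nonneg (sub_nonneg.2 (min_le_right _ _))]
    linarith [le_min (by positivity : 0 ≤ K * |x| ^ γ) hh]
  have hsupp : ∀ x ∉ Icc (-W) W, K * W ^ γ - min (K * |x| ^ γ) (K * W ^ γ) = 0 := fun x hx => by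
    have hWx : W ≤ |x| := by
      contrapose! hx
      exact abs_le.1 hx.le
    rw [sub_eq_zero, eq_comm]
    exact min_eq_right (by gcongr)
  have hμ : (μI (Icc (-W) W)).toReal ≤ 2 * W := by
    calc (μI (Icc (-W) W)).toReal ≤ (volume (Icc (-W) W)).toReal :=
          ENNReal.toReal_mono (by simp [Real.volume_Icc]) (Measure.restrict_apply_le _ _)
      _ = 2 * W := by rw [Real.volume_Icc, ENNReal.toReal_ofReal (by linarith)]; ring
  calc ‖F‖ ≤ K * W ^ γ * √(μI (Icc (-W) W)).toReal :=
        norm_le_mul_sqrt_of_abs_le _ hF measurableSet_Icc (measure_ne_top _ _) hh hle hsupp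
    _ ≤ K * W ^ γ * √(2 * W) := by gcongr

lemma exists_holderOnIcc_pair {u : ℝ → ℝ} {K γ a b M N lo hi : ℝ} (hu : HolderOnIcc K γ u lo hi)
    (hu0 : u 0 = 0) (hK : 0 ≤ K) (hlen : hi - lo ≤ 1) (hmin : min a b ≤ γ) (ha : 0 ≤ a)
    (hb : 0 ≤ b) (hM : K ≤ M) (hN : K ≤ N) (c : ℝ) :
    ∃ φ ψ : ℝ → ℝ, HolderOnIcc M a φ lo hi ∧ HolderOnIcc N b ψ lo hi ∧ φ 0 = 0 ∧
      ∀ x, ψ x = φ x + (c - u x) := by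
  rcases min_le_iff.1 hmin with haγ | hbγ
  · exact ⟨u, fun _ => c, (hu.mono_exponent hK ha haγ hlen).mono_const hM,
      HolderOnIcc.const (hK.trans hN) c, hu0, fun x => by ring⟩
  · exact ⟨fun _ => 0, fun x => c - u x, HolderOnIcc.const (hK.trans hM) 0,
      ((hu.mono_exponent hK hb hbγ hlen).mono_const hN).const_sub c, rfl, fun x => by ring⟩

theorem exists_pair_apply_sub_eq {T : H → ℝ} (hT : EvaluatesAtZero T)
    {α₁ α₂ β₁ β₂ M₁ M₂ N₁ N₂ K γ W : ℝ} (hα₁ : 0 < α₁) (hα₂ : 0 < α₂) (hβ₁ : 0 < β₁)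
    (hβ₂ : 0 < β₂) (hγ₁ : min α₁ β₁ ≤ γ) (hγ₂ : min α₂ β₂ ≤ γ) (hγ : 0 < γ) (hγ1 : γ ≤ 1)
    (hK : 0 ≤ K) (hKM₁ : K ≤ M₁) (hKM₂ : K ≤ M₂) (hKN₁ : K ≤ N₁) (hKN₂ : K ≤ N₂) (hW : 0 ≤ W) :
    ∃ f ∈ twoSidedHolderClass α₁ M₁ α₂ M₂, ∃ g ∈ twoSidedHolderClass β₁ N₁ β₂ N₂,
      ‖g - f‖ ≤ K * W ^ γ * √(2 * W) ∧ T g - T f = K * W ^ γ := by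
  set h := K * W ^ γ
  set e : ℝ → ℝ := fun x => min (K * |x| ^ γ) h
  have hh : 0 ≤ h := by positivity
  have he0 : e 0 = 0 := by simp [e, zero_rpow hγ.ne', hh]
  have he := holderOnIcc_min_mul_abs_rpow hK hγ.le hγ1 h
  obtain ⟨φL, ψL, hφL, hψL, hφL0, hψφL⟩ := exists_holderOnIcc_pair (he (-(1:ℝ)/2) 0) he0 hK
    (by norm_num) hγ₁ hα₁.le hβ₁.le hKM₁ hKN₁ h
  obtain ⟨φR, ψR, hφR, hψR, hφR0, hψφR⟩ := exists_holderOnIcc_pair (he 0 (1/2)) he0 hK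
    (by norm_num) hγ₂ hα₂.le hβ₂.le hKM₂ hKN₂ h
  obtain ⟨hfL, hfR⟩ := holderOnIcc_ite_le_zero hφL hφR (hφL0.trans hφR0.symm)
  obtain ⟨hgL, hgR⟩ := holderOnIcc_ite_le_zero hψL hψR (by rw [hψφL, hψφR, hφL0, hφR0])
  obtain ⟨f, hf, hfu, hTf⟩ := exists_mem_twoSidedHolderClass hT hfL hfR hα₁ hα₂
  obtain ⟨g, hg, hgv, hTg⟩ := exists_mem_twoSidedHolderClass hT hgL hgR hβ₁ hβ₂
  have hbump : ∀ x, (if x ≤ 0 then ψL x else ψR x) - (if x ≤ 0 then φL x else φR x) = h - e x :=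
    fun x => by split_ifs <;> simp [hψφL, hψφR, e]
  exact ⟨f, hf, g, hg, norm_le_of_ae_eq_bump hK hγ.le hW
    ((Lp.coeFn_sub g f).trans ((hgv.sub hfu).trans (ae_of_all _ hbump))),
    by rw [hTf, hTg, hbump, he0, sub_zero]⟩

theorem exists_pair_apply_sub_eq_rpow {T : H → ℝ} (hT : EvaluatesAtZero T)
    {α₁ α₂ β₁ β₂ M₁ M₂ N₁ N₂ K γ ε : ℝ} (hα₁ : 0 < α₁) (hα₂ : 0 < α₂) (hβ₁ : 0 < β₁)
    (hβ₂ : 0 < β₂) (hγ₁ : min α₁ β₁ ≤ γ) (hγ₂ : min α₂ β₂ ≤ γ) (hγ : 0 < γ) (hγ1 : γ ≤ 1)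
    (hK : 0 < K) (hKM₁ : K ≤ M₁) (hKM₂ : K ≤ M₂) (hKN₁ : K ≤ N₁) (hKN₂ : K ≤ N₂) (hε : 0 < ε) :
    ∃ f ∈ twoSidedHolderClass α₁ M₁ α₂ M₂, ∃ g ∈ twoSidedHolderClass β₁ N₁ β₂ N₂,
      ‖g - f‖ ≤ ε ∧
        T g - T f = K / (2 * K) ^ (2 * γ / (2 * γ + 1)) * ε ^ (2 * γ / (2 * γ + 1)) := by
  set r := ε / (2 * K)
  have hr : 0 < r := by positivity
  have hWγ : (r ^ (2 / (2 * γ + 1))) ^ γ = r ^ (2 * γ / (2 * γ + 1)) := by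
    rw [← rpow_mul hr.le]; congr 1; ring
  have hsqrtW : √(r ^ (2 / (2 * γ + 1))) = r ^ (1 / (2 * γ + 1)) := by
    rw [Real.sqrt_eq_rpow, ← rpow_mul hr.le]; congr 1; ring
  obtain ⟨f, hf, g, hg, hfg, hval⟩ := exists_pair_apply_sub_eq hT hα₁ hα₂ hβ₁ hβ₂ hγ₁ hγ₂ hγ hγ1
    hK.le hKM₁ hKM₂ hKN₁ hKN₂ (rpow_nonneg hr.le (2 / (2 * γ + 1)))
  refine ⟨f, hf, g, hg, hfg.trans ?_, ?_⟩
  · rw [Real.sqrt_mul zero_le_two, hWγ, hsqrtW]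
    calc K * r ^ (2 * γ / (2 * γ + 1)) * (√2 * r ^ (1 / (2 * γ + 1)))
        = √2 * K * r ^ (2 * γ / (2 * γ + 1) + 1 / (2 * γ + 1)) := by rw [rpow_add hr]; ring
      _ = √2 / 2 * ε := by
          rw [show 2 * γ / (2 * γ + 1) + 1 / (2 * γ + 1) = 1 by field_simp, rpow_one]
          simp only [r]
          field_simp
      _ ≤ ε := by nlinarith [Real.sqrt_le_iff.2 ⟨zero_le_two, (by norm_num : (2 : ℝ) ≤ 2 ^ 2)⟩]
  · rw [hval, hWγ, div_rpow hε.le (by positivity)]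
    ring

lemma omegaPlus_le {T : H → ℝ} {F G : Set H} {ε B : ℝ} (hB : 0 ≤ B)
    (h : ∀ f ∈ F, ∀ g ∈ G, ‖g - f‖ ≤ ε → |T g - T f| ≤ B) : omegaPlus T F G ε ≤ B := by
  refine max_le (Real.sSup_le ?_ hB) (Real.sSup_le ?_ hB)
  · rintro _ ⟨f, hf, g, hg, hfg, rfl⟩
    exact (le_abs_self _).trans (h f hf g hg hfg)
  · rintro _ ⟨g, hg, f, hf, hfg, rfl⟩
    rw [norm_sub_rev] at hfg
    exact (le_abs_self _).trans ((abs_sub_comm _ _).trans_le (h f hf g hg hfg))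

lemma le_omegaPlus {T : H → ℝ} {F G : Set H} {ε B : ℝ}
    (h : ∀ f ∈ F, ∀ g ∈ G, ‖g - f‖ ≤ ε → |T g - T f| ≤ B) {f g : H} (hf : f ∈ F) (hg : g ∈ G)
    (hfg : ‖g - f‖ ≤ ε) : T g - T f ≤ omegaPlus T F G ε := by
  have hbdd : BddAbove (modSet T F G ε) := ⟨B, by
    rintro _ ⟨f, hf, g, hg, hfg, rfl⟩
    exact (le_abs_self _).trans (h f hf g hg hfg)⟩
  exact (le_csSup hbdd ⟨f, hf, g, hg, hfg, rfl⟩).trans (le_max_left _ _)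

/-- Example 2: for `T f = f(0)`, `F₁ = F(α₁, M₁, α₂, M₂)` and `F₂ = F(β₁, N₁, β₂, N₂)` with
`0 < α₂ ≤ α₁ ≤ 1` and `0 < β₁ ≤ β₂ ≤ 1`, the between-class modulus satisfies
`ω₊(ε, F₁, F₂) ≍ ε^{2γ/(2γ+1)}` with `γ = max(min(α₁, β₁), min(α₂, β₂))`. -/
theorem example2_between_class_modulus
    (α₁ α₂ β₁ β₂ M₁ M₂ N₁ N₂ : ℝ)
    (hα₂ : 0 < α₂) (hα : α₂ ≤ α₁) (hα₁ : α₁ ≤ 1)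
    (hβ₁ : 0 < β₁) (hβ : β₁ ≤ β₂) (hβ₂ : β₂ ≤ 1)
    (hM₁ : 0 < M₁) (hM₂ : 0 < M₂) (hN₁ : 0 < N₁) (hN₂ : 0 < N₂)
    (T : H → ℝ)
    (hT : ∀ (f : H) (g : ℝ → ℝ), ContinuousOn g (Set.Icc (-(1:ℝ)/2) (1/2)) →
      (∀ᵐ x ∂(volume.restrict (Set.Icc (-(1:ℝ)/2) (1/2))), f x = g x) → T f = g 0) :
    ∃ c C ε₀ : ℝ, 0 < c ∧ c ≤ C ∧ 0 < ε₀ ∧ ∀ ε : ℝ, 0 < ε → ε ≤ ε₀ →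
      c * ε ^ (2 * max (min α₁ β₁) (min α₂ β₂) / (2 * max (min α₁ β₁) (min α₂ β₂) + 1))
          ≤ omegaPlus T (twoSidedHolderClass α₁ M₁ α₂ M₂) (twoSidedHolderClass β₁ N₁ β₂ N₂) ε ∧
        omegaPlus T (twoSidedHolderClass α₁ M₁ α₂ M₂) (twoSidedHolderClass β₁ N₁ β₂ N₂) ε
          ≤ C * ε ^ (2 * max (min α₁ β₁) (min α₂ β₂)
              / (2 * max (min α₁ β₁) (min α₂ β₂) + 1)) := by
  have hα₁pos : 0 < α₁ := hα₂.trans_le hα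
  have hβ₂pos : 0 < β₂ := hβ₁.trans_le hβ
  set γ := max (min α₁ β₁) (min α₂ β₂)
  have hγ : 0 < γ := lt_max_of_lt_left (lt_min hα₁pos hβ₁)
  have hγ1 : γ ≤ 1 := max_le ((min_le_left _ _).trans hα₁) ((min_le_right _ _).trans hβ₂)
  set K := min (min M₁ N₁) (min M₂ N₂)
  have hK : 0 < K := lt_min (lt_min hM₁ hN₁) (lt_min hM₂ hN₂)
  set c := K / (2 * K) ^ (2 * γ / (2 * γ + 1))
  have hc : 0 < c := by positivity
  refine ⟨c, max (M₁ + N₁ + M₂ + N₂ + 2) c, 1, hc, le_max_right _ _, one_pos, fun ε hε hε1 => ?_⟩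
  have hup := fun f (hf : f ∈ twoSidedHolderClass α₁ M₁ α₂ M₂) g
      (hg : g ∈ twoSidedHolderClass β₁ N₁ β₂ N₂) (hfg : ‖g - f‖ ≤ ε) =>
    abs_sub_le_of_norm_sub_le hT hα₁pos hα₂ hβ₁ hβ₂pos hM₁.le hM₂.le hN₁.le hN₂.le hε hε1 hf hg hfg
  obtain ⟨f, hf, g, hg, hfg, hval⟩ := exists_pair_apply_sub_eq_rpow hT hα₁pos hα₂ hβ₁ hβ₂pos
    (le_max_left _ _) (le_max_right _ _) hγ hγ1 hK ((min_le_left _ _).trans (min_le_left _ _))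
    ((min_le_right _ _).trans (min_le_left _ _)) ((min_le_left _ _).trans (min_le_right _ _))
    ((min_le_right _ _).trans (min_le_right _ _)) hε
  constructor
  · exact hval ▸ le_omegaPlus hup hf hg hfg
  · exact (omegaPlus_le (by positivity) hup).trans (by gcongr; exact le_max_left _ _)
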